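/- Let q be an odd prime and d a positive integer with -d ≡ 0, 1 (mod 4) and with -d a quadratic nonresidue modulo q (in particular q ∤ d). Let β ∈ ℤ. Then the three integers q², q(d - 2β), and β² - dβ + d(d+1)/4 have greatest common divisor 1. -/

import Mathlib

/-! Any common divisor of the three integers is a power of `q`, and `q` cannot divide the constant
term `c`, because `4 c = (2β - d)² + d` and `-d` is not a square modulo `q`. -/

theorem Int.four_dvd_mul_add_one_of_neg_emod_four {d : ℤ} (hd : -d % 4 = 0 ∨ -d % 4 = 1) :
    4 ∣ d * (d + 1) := by
  rcases hd with h | h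
  · exact (Int.dvd_of_emod_eq_zero (by omega)).mul_right _
  · exact (Int.dvd_of_emod_eq_zero (by omega)).mul_left _

theorem Int.four_mul_sq_sub_mul_add_eq {d : ℤ} (hd : 4 ∣ d * (d + 1)) (β : ℤ) :
    4 * (β ^ 2 - d * β + d * (d + 1) / 4) = (2 * β - d) ^ 2 + d := by
  rw [mul_add, Int.mul_ediv_cancel' hd]
  ring

theorem Int.gcd_prime_pow_gcd_eq_one {p : ℕ} (hp : p.Prime) (k : ℕ) (a : ℤ) {b : ℤ}
    (hb : ¬ (p : ℤ) ∣ b) : Int.gcd ((p : ℤ) ^ k) (Int.gcd a b) = 1 :=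
  Int.isCoprime_iff_gcd_eq_one.mp <|
    ((Nat.prime_iff_prime_int.mp hp).coprime_iff_not_dvd.mpr hb).pow_left.of_isCoprime_of_dvd_right
      (Int.gcd_dvd_right _ _)

theorem stmt_18_general (q : ℕ) (hq : q.Prime) (d : ℕ)
    (hd4 : (-(d : ℤ)) % 4 = 0 ∨ (-(d : ℤ)) % 4 = 1)
    (hnr : ∀ x : ℤ, ¬ (q : ℤ) ∣ x ^ 2 + (d : ℤ)) (β : ℤ) :
    Int.gcd ((q : ℤ) ^ 2)
      (Int.gcd ((q : ℤ) * ((d : ℤ) - 2 * β))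
        (β ^ 2 - (d : ℤ) * β + (d : ℤ) * (d + 1) / 4)) = 1 := by
  refine Int.gcd_prime_pow_gcd_eq_one hq 2 _ fun h => hnr (2 * β - d) ?_
  rw [← Int.four_mul_sq_sub_mul_add_eq (Int.four_dvd_mul_add_one_of_neg_emod_four hd4)]
  exact h.mul_left 4

theorem stmt_18 (q : ℕ) (hq : q.Prime) (hodd : Odd q) (d : ℕ) (hd : 0 < d)
    (hd4 : (-(d : ℤ)) % 4 = 0 ∨ (-(d : ℤ)) % 4 = 1)
    (hnr : ∀ x : ℤ, ¬ (q : ℤ) ∣ x ^ 2 + (d : ℤ)) (β : ℤ) :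
    Int.gcd ((q : ℤ) ^ 2)
      (Int.gcd ((q : ℤ) * ((d : ℤ) - 2 * β))
        (β ^ 2 - (d : ℤ) * β + (d : ℤ) * (d + 1) / 4)) = 1 :=
  stmt_18_general q hq d hd4 hnr β
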